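/- Let U ⊂ ℝ² be open, let x₀ ∈ U, and let g : U → ℝ be continuous on U and harmonic on U \ {x₀}. Then g is harmonic on all of U. -/

import Mathlib

/-!
Identify `ℝ²` with `ℂ`. Away from `x₀` the function `f_x - i f_y` is holomorphic, and on a disc
of radius `r` avoiding `x₀` it is the derivative of a holomorphic `F` with `Re F = f`. The
Schwarz lemma bounds `|F'|` at the centre by the oscillation of `f` on the disc divided by `r`;
taking `r` comparable to the distance to `x₀`, continuity of `f` at `x₀` makes
`f_x - i f_y = o(1 / |z - x₀|)`, so the singularity is removable. A primitive `F` of the extended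
function on a disc around `x₀` then satisfies `f = Re F` there: the difference has zero
derivative off `x₀` and is continuous at `x₀`. Real parts of holomorphic functions are harmonic.
-/

noncomputable section
open MeasureTheory Metric Filter Topology Set
open scoped ENNReal NNReal

abbrev R2 := EuclideanSpace ℝ (Fin 2)

/-- The partial derivative `∂_i f` of `f : ℝ² → ℝ`. -/
def pd (i : Fin 2) (f : R2 → ℝ) (x : R2) : ℝ := fderiv ℝ f x (EuclideanSpace.single i 1)

/-- `f` is harmonic on the open set `U`: twice continuously differentiable with `Δf = 0`. -/
def HarmonicOnSet (U : Set R2) (f : R2 → ℝ) : Prop :=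
  ContDiffOn ℝ 2 f U ∧ ∀ x ∈ U, pd 0 (pd 0 f) x + pd 1 (pd 1 f) x = 0

open InnerProductSpace Laplacian Complex

section Isometry

variable {E E' F : Type*} [NormedAddCommGroup E] [InnerProductSpace ℝ E] [FiniteDimensional ℝ E]
  [NormedAddCommGroup E'] [InnerProductSpace ℝ E'] [FiniteDimensional ℝ E']
  [NormedAddCommGroup F] [NormedSpace ℝ F]

theorem InnerProductSpace.laplacian_comp_linearIsometryEquiv (l : E ≃ₗᵢ[ℝ] E') (f : E' → F)
    (x : E) : Δ (f ∘ l) x = Δ f (l x) := by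
  have hcomp : iteratedFDeriv ℝ 2 (f ∘ l) x =
      (iteratedFDeriv ℝ 2 f (l x)).compContinuousLinearMap fun _ => (l : E →L[ℝ] E') := by
    simp only [← iteratedFDerivWithin_univ]
    exact l.toContinuousLinearEquiv.iteratedFDerivWithin_comp_right f uniqueDiffOn_univ
      (mem_univ (l x)) 2
  rw [laplacian_eq_iteratedFDeriv_stdOrthonormalBasis (f ∘ l),
    laplacian_eq_iteratedFDeriv_orthonormalBasis f ((stdOrthonormalBasis ℝ E).map l)]
  simp only [hcomp, ContinuousMultilinearMap.compContinuousLinearMap_apply,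
    OrthonormalBasis.map_apply]
  refine Finset.sum_congr rfl fun i _ => congrArg _ ?_
  ext j
  fin_cases j <;> rfl

theorem InnerProductSpace.HarmonicAt.comp_linearIsometryEquiv {f : E' → F} (l : E ≃ₗᵢ[ℝ] E')
    {x : E} (hf : HarmonicAt f (l x)) : HarmonicAt (f ∘ l) x := by
  refine ⟨hf.1.comp x l.contDiff.contDiffAt, ?_⟩
  filter_upwards [l.continuous.continuousAt.preimage_mem_nhds hf.2] with y hy
  rw [laplacian_comp_linearIsometryEquiv]
  exact hy

end Isometry

theorem pd_pd_eq_iteratedFDeriv {f : R2 → ℝ} {x : R2} (hf : ContDiffAt ℝ 2 f x) (i : Fin 2) :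
    pd i (pd i f) x =
      iteratedFDeriv ℝ 2 f x ![EuclideanSpace.single i 1, EuclideanSpace.single i 1] := by
  have hd : DifferentiableAt ℝ (fderiv ℝ f) x := by fun_prop
  unfold pd
  rw [iteratedFDeriv_two_apply, fderiv_clm_apply hd (differentiableAt_const _)]
  simp

theorem laplacian_eq_pd_add_pd {f : R2 → ℝ} {x : R2} (hf : ContDiffAt ℝ 2 f x) :
    Δ f x = pd 0 (pd 0 f) x + pd 1 (pd 1 f) x := by
  rw [laplacian_eq_iteratedFDeriv_orthonormalBasis f (EuclideanSpace.basisFun (Fin 2) ℝ),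
    pd_pd_eq_iteratedFDeriv hf, pd_pd_eq_iteratedFDeriv hf]
  simp

theorem harmonicOnSet_iff_harmonicOnNhd {U : Set R2} (hU : IsOpen U) {f : R2 → ℝ} :
    HarmonicOnSet U f ↔ HarmonicOnNhd f U := by
  constructor
  · rintro ⟨hf, hΔ⟩ x hx
    refine ⟨hf.contDiffAt (hU.mem_nhds hx), ?_⟩
    filter_upwards [hU.mem_nhds hx] with y hy
    rw [laplacian_eq_pd_add_pd (hf.contDiffAt (hU.mem_nhds hy)), hΔ y hy, Pi.zero_apply]
  · intro hf
    refine ⟨hf.contDiffOn, fun x hx => ?_⟩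
    rw [← laplacian_eq_pd_add_pd (hf x hx).1]
    exact (hf x hx).2.eq_of_nhds

/-- `f_x - i f_y`, the derivative of any holomorphic `F` with `Re F = f` near `z`. -/
def complexPartial (f : ℂ → ℝ) (z : ℂ) : ℂ := fderiv ℝ f z 1 - I * fderiv ℝ f z I

theorem fderiv_apply_eq_re_complexPartial_mul (f : ℂ → ℝ) (z v : ℂ) :
    fderiv ℝ f z v = (complexPartial f z * v).re := by
  have hv : v = v.re • (1 : ℂ) + v.im • I := by simp
  conv_lhs => rw [hv, map_add, map_smul, map_smul]
  simp only [smul_eq_mul, complexPartial, mul_re, sub_re, ofReal_re, I_re, zero_mul, I_im,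
    ofReal_im, mul_zero, sub_self, sub_zero, sub_im, mul_im, one_mul, zero_add, zero_sub, neg_mul,
    sub_neg_eq_add]
  ring

theorem fderiv_eq_of_complexPartial_eq {f g : ℂ → ℝ} {z : ℂ}
    (h : complexPartial f z = complexPartial g z) : fderiv ℝ f z = fderiv ℝ g z :=
  ContinuousLinearMap.ext fun v => by
    rw [fderiv_apply_eq_re_complexPartial_mul, fderiv_apply_eq_re_complexPartial_mul, h]

theorem complexPartial_re_eq_deriv {F : ℂ → ℂ} {z : ℂ} (hF : DifferentiableAt ℂ F z) :
    complexPartial (fun w => (F w).re) z = deriv F z := by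
  have h : HasFDerivAt (fun w => (F w).re)
      (reCLM.comp ((ContinuousLinearMap.smulRight (1 : ℂ →L[ℂ] ℂ) (deriv F z)).restrictScalars ℝ))
      z :=
    reCLM.hasFDerivAt.comp z (hF.hasDerivAt.hasFDerivAt.restrictScalars ℝ)
  apply Complex.ext <;> simp [complexPartial, h.fderiv]

theorem hasFDerivAt_sub_re_eq_zero {f : ℂ → ℝ} {F : ℂ → ℂ} {z : ℂ}
    (hf : DifferentiableAt ℝ f z) (hF : HasDerivAt F (complexPartial f z) z) :
    HasFDerivAt (fun w => f w - (F w).re) (0 : ℂ →L[ℝ] ℝ) z := by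
  have hRe : DifferentiableAt ℝ (fun w => (F w).re) z :=
    reCLM.differentiableAt.comp z (hF.differentiableAt.restrictScalars ℝ)
  have hfderiv : fderiv ℝ f z = fderiv ℝ (fun w => (F w).re) z := by
    refine fderiv_eq_of_complexPartial_eq ?_
    rw [complexPartial_re_eq_deriv hF.differentiableAt, hF.deriv]
  have h := hf.hasFDerivAt.sub hRe.hasFDerivAt
  rwa [hfderiv, sub_self] at h

theorem Complex.norm_le_norm_two_mul_sub_of_re_le {u : ℂ} {M : ℝ} (hM : 0 ≤ M) (h : u.re ≤ M) :
    ‖u‖ ≤ ‖2 * M - u‖ := by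
  rw [← sq_le_sq₀ (norm_nonneg _) (norm_nonneg _), Complex.sq_norm, Complex.sq_norm,
    normSq_apply, normSq_apply]
  simp only [sub_re, sub_im, mul_re, mul_im, ofReal_re, ofReal_im, re_ofNat, im_ofNat, zero_mul,
    mul_zero, sub_zero, add_zero, zero_sub]
  nlinarith

theorem Complex.norm_deriv_le_of_re_sub_le {F : ℂ → ℂ} {z : ℂ} {r M : ℝ} (hr : 0 < r)
    (hM : 0 < M) (hF : DifferentiableOn ℂ F (ball z r))
    (hre : ∀ w ∈ ball z r, (F w - F z).re ≤ M) : ‖deriv F z‖ ≤ 2 * M / r := by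
  -- `u ↦ u / (2M - u)` maps the half-plane `Re u ≤ M` into the closed unit disc.
  set φ : ℂ → ℂ := fun w => (F w - F z) / (2 * M - (F w - F z))
  have hden : ∀ w ∈ ball z r, (2 * M - (F w - F z) : ℂ) ≠ 0 := by
    intro w hw h
    have := congrArg re h
    simp only [sub_re, mul_re, re_ofNat, ofReal_re, im_ofNat, ofReal_im, mul_zero, sub_zero,
      zero_re] at this
    linarith [hre w hw, sub_re (F w) (F z)]
  have hφ : DifferentiableOn ℂ φ (ball z r) :=
    (hF.sub_const _).div ((hF.sub_const _).const_sub _) hden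
  have hmaps : MapsTo φ (ball z r) (closedBall (φ z) 1) := by
    intro w hw
    simp only [φ, sub_self, zero_div, mem_closedBall_zero_iff, norm_div]
    exact div_le_one_of_le₀ (norm_le_norm_two_mul_sub_of_re_le hM.le (hre w hw)) (norm_nonneg _)
  have hderiv : deriv φ z = deriv F z / (2 * M) := by
    have hFz := (hF.differentiableAt (ball_mem_nhds z hr)).hasDerivAt.sub_const (F z)
    have h2M : (2 * M : ℂ) ≠ 0 := by exact_mod_cast (by positivity : 2 * M ≠ 0)
    have hφz : HasDerivAt φ _ z := hFz.div (hFz.const_sub (2 * M : ℂ)) (by simpa using h2M)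
    rw [hφz.deriv, sub_self, sub_zero, zero_mul, sub_zero]
    field_simp
  have hnorm : ‖(2 * M : ℂ)‖ = 2 * M := by
    rw [norm_mul, Complex.norm_real, Real.norm_of_nonneg hM.le]
    norm_num
  have hschwarz := norm_deriv_le_div_of_mapsTo_ball hφ hmaps hr
  rw [hderiv, norm_div, hnorm, div_le_div_iff₀ (by positivity) hr] at hschwarz
  rw [le_div_iff₀ hr]
  linarith

theorem InnerProductSpace.HarmonicOnNhd.norm_complexPartial_le {f : ℂ → ℝ} {z : ℂ} {r M : ℝ}
    (hr : 0 < r) (hM : 0 < M) (hf : HarmonicOnNhd f (ball z r))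
    (hle : ∀ w ∈ ball z r, f w - f z ≤ M) : ‖complexPartial f z‖ ≤ 2 * M / r := by
  obtain ⟨F, hFa, hFf⟩ := hf.exists_analyticOnNhd_ball_re_eq
  have hFd : DifferentiableOn ℂ F (ball z r) := hFa.differentiableOn
  have hpartial : complexPartial f z = deriv F z := by
    have hfF : (fun w => (F w).re) =ᶠ[𝓝 z] f := eventually_of_mem (ball_mem_nhds z hr) hFf
    rw [← complexPartial_re_eq_deriv (hFd.differentiableAt (ball_mem_nhds z hr)),
      complexPartial, complexPartial, hfF.fderiv_eq]
  rw [hpartial]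
  refine norm_deriv_le_of_re_sub_le hr hM hFd fun w hw => ?_
  simpa only [sub_re, ← hFf hw, ← hFf (mem_ball_self hr)] using hle w hw

theorem complexPartial_isLittleO_sub_inv {f : ℂ → ℝ} {c : ℂ} {δ : ℝ} (hδ : 0 < δ)
    (hf : HarmonicOnNhd f (ball c δ \ {c})) (hc : ContinuousAt f c) :
    complexPartial f =o[𝓝[≠] c] fun z => (z - c)⁻¹ := by
  rw [Asymptotics.isLittleO_iff]
  intro ε hε
  obtain ⟨δ', hδ', hfδ'⟩ := Metric.continuousAt_iff.1 hc (ε / 8) (by positivity)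
  set ρ := min δ δ'
  have hρ : 0 < ρ := lt_min hδ hδ'
  filter_upwards [inter_mem_nhdsWithin {c}ᶜ (ball_mem_nhds c (half_pos hρ))] with z ⟨hzc, hz⟩
  have hzc' : 0 < dist z c := dist_pos.2 hzc
  set r := dist z c / 2 with hr_def
  have hr : 0 < r := half_pos hzc'
  have hsub : ball z r ⊆ ball c ρ \ {c} := by
    intro w hw
    rw [mem_ball] at hz hw
    refine ⟨?_, fun hwc => ?_⟩
    · rw [mem_ball]
      linarith [dist_triangle w z c]
    · rw [hwc, dist_comm] at hw
      linarith
  have hosc : ∀ w ∈ ball c ρ, |f w - f c| < ε / 8 := fun w hw =>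
    hfδ' (lt_of_lt_of_le (mem_ball.1 hw) (min_le_right _ _))
  have hharm : HarmonicOnNhd f (ball z r) :=
    hf.mono (hsub.trans (sdiff_subset_sdiff_left (ball_subset_ball (min_le_left _ _))))
  have hbound := hharm.norm_complexPartial_le hr (M := ε / 4) (by positivity) fun w hw => by
    have hw' := hosc w (hsub hw).1
    have hz' := hosc z (hsub (mem_ball_self hr)).1
    rw [abs_lt] at hw' hz'
    linarith
  calc ‖complexPartial f z‖ ≤ 2 * (ε / 4) / r := hbound
    _ = ε * ‖(z - c)⁻¹‖ := by
      rw [norm_inv, ← dist_eq_norm]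
      field_simp
      ring

theorem eq_of_hasFDerivAt_zero_on_punctured_ball {E F : Type*} [NormedAddCommGroup E]
    [NormedSpace ℝ E] [NormedAddCommGroup F] [NormedSpace ℝ F] {u : E → F} {c : E} {r : ℝ}
    (hc : ContinuousAt u c) (hu : ∀ x ∈ ball c r \ {c}, HasFDerivAt u (0 : E →L[ℝ] F) x) :
    ∀ x ∈ ball c r, u x = u c := by
  intro x hx
  rcases eq_or_ne x c with rfl | hxc
  · rfl
  -- Along the segment from `x` to `c`, only the endpoint `c` lies outside the punctured ball.
  set γ : ℝ → E := fun t => x + t • (c - x)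
  have hγ : ∀ t, γ t - c = (1 - t) • (x - c) := fun t => by
    simp only [γ, sub_smul, one_smul, smul_sub]
    abel
  have hγmem : ∀ t ∈ Ico (0 : ℝ) 1, γ t ∈ ball c r \ {c} := by
    intro t ht
    have h1t : 0 < 1 - t := by linarith [ht.2]
    rw [Set.mem_sdiff, mem_ball, dist_eq_norm, hγ, norm_smul, Real.norm_of_nonneg h1t.le,
      mem_singleton_iff, ← sub_eq_zero, hγ, smul_eq_zero, not_or]
    rw [mem_ball, dist_eq_norm] at hx
    exact ⟨by nlinarith [norm_nonneg (x - c), ht.1], h1t.ne', sub_ne_zero.2 hxc⟩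
  have hγd : ∀ t, HasDerivAt γ (c - x) t := fun t => by
    simpa [γ] using ((hasDerivAt_id t).smul_const (c - x)).const_add x
  have hderiv : ∀ t ∈ Ico (0 : ℝ) 1, HasDerivAt (u ∘ γ) 0 t := fun t ht => by
    simpa using (hu (γ t) (hγmem t ht)).comp_hasDerivAt t (hγd t)
  have hcont : ContinuousOn (u ∘ γ) (Icc 0 1) := by
    intro t ht
    rcases eq_or_lt_of_le ht.2 with rfl | ht1
    · refine (ContinuousAt.comp_of_eq hc (hγd 1).continuousAt ?_).continuousWithinAt
      simp [γ]
    · exact (hderiv t ⟨ht.1, ht1⟩).continuousAt.continuousWithinAt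
  have hconst := constant_of_has_deriv_right_zero hcont
    (fun t ht => (hderiv t ht).hasDerivWithinAt) 1 (right_mem_Icc.2 zero_le_one)
  simpa [γ] using hconst.symm

theorem harmonicAt_of_harmonic_on_punctured_nhds_of_continuousAt {f : ℂ → ℝ} {c : ℂ}
    (hf : ∀ᶠ z in 𝓝[≠] c, HarmonicAt f z) (hc : ContinuousAt f c) : HarmonicAt f c := by
  obtain ⟨δ, hδ, hδf⟩ := Metric.mem_nhdsWithin_iff.1 hf
  replace hδf : HarmonicOnNhd f (ball c δ \ {c}) := fun z hz => hδf hz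
  have hP : DifferentiableOn ℂ (complexPartial f) (ball c δ \ {c}) := fun z hz =>
    (HarmonicAt.analyticAt_complex_partial (hδf z hz)).differentiableAt.differentiableWithinAt
  have hPo := (complexPartial_isLittleO_sub_inv hδ hδf hc).sub
    (isBoundedUnder_const (a := ‖complexPartial f c‖)).isLittleO_sub_self_inv
  obtain ⟨F, hFc, hF⟩ := (Complex.differentiableOn_update_limUnder_of_isLittleO
    (ball_mem_nhds c hδ) hP hPo).isExactOn_ball.with_val_at c (f c : ℂ)
  have hFf : ∀ z ∈ ball c δ, f z - (F z).re = f c - (F c).re := by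
    refine eq_of_hasFDerivAt_zero_on_punctured_ball
      (hc.sub (continuous_re.continuousAt.comp (hF c (mem_ball_self hδ)).continuousAt))
      fun z hz => hasFDerivAt_sub_re_eq_zero ((hδf z hz).1.differentiableAt two_ne_zero) ?_
    simpa [Function.update_of_ne hz.2] using hF z hz.1
  have hFa : AnalyticAt ℂ F c := DifferentiableOn.analyticAt
    (fun z hz => (hF z hz).differentiableAt.differentiableWithinAt) (ball_mem_nhds c hδ)
  have hFc' : (F c).re = f c := by simp [hFc]
  refine (harmonicAt_congr_nhds ?_).1 hFa.harmonicAt_re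
  filter_upwards [ball_mem_nhds c hδ] with z hz
  linarith [hFf z hz]

theorem harmonic_of_harmonic_off_point_general
    (U : Set R2) (hU : IsOpen U) (x₀ : R2)
    (g : R2 → ℝ) (hcont : ContinuousOn g U)
    (hharm : HarmonicOnSet (U \ {x₀}) g) :
    HarmonicOnSet U g := by
  have hoff := (harmonicOnSet_iff_harmonicOnNhd (hU.sdiff isClosed_singleton)).1 hharm
  rw [harmonicOnSet_iff_harmonicOnNhd hU]
  intro x hx
  rcases eq_or_ne x x₀ with rfl | hne
  · set m : ℂ ≃ₗᵢ[ℝ] R2 := Complex.orthonormalBasisOneI.repr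
    have hpunct : ∀ᶠ y in 𝓝[≠] x, HarmonicAt g y :=
      eventually_of_mem (sdiff_mem_nhdsWithin_compl (hU.mem_nhds hx) {x}) hoff
    have hm : Tendsto m (𝓝[≠] (m.symm x)) (𝓝[≠] x) := by
      simpa [Tendsto] using (m.toHomeomorph.map_punctured_nhds_eq (m.symm x)).le
    have hcont' : ContinuousAt (g ∘ m) (m.symm x) :=
      ContinuousAt.comp_of_eq (hcont.continuousAt (hU.mem_nhds hx)) m.continuous.continuousAt
        (m.apply_symm_apply x)
    have hC := harmonicAt_of_harmonic_on_punctured_nhds_of_continuousAt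
      ((hm.eventually hpunct).mono fun y hy => hy.comp_linearIsometryEquiv m) hcont'
    simpa [Function.comp_def] using hC.comp_linearIsometryEquiv m.symm
  · exact hoff x ⟨hx, hne⟩

/-- a function continuous on an open set `U ⊆ ℝ²` and harmonic away from a
single point `x₀ ∈ U` is harmonic on all of `U`. -/
theorem harmonic_of_harmonic_off_point
    (U : Set R2) (hU : IsOpen U) (x₀ : R2) (hx₀ : x₀ ∈ U)
    (g : R2 → ℝ) (hcont : ContinuousOn g U)
    (hharm : HarmonicOnSet (U \ {x₀}) g) :
    HarmonicOnSet U g :=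
  harmonic_of_harmonic_off_point_general U hU x₀ g hcont hharm
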